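/- Let K_1, …, K_d be linearly independent real symmetric m×m matrices such that some linear combination is positive definite, and let L be their span. Then the map K ↦ (trace(K^{-1}·K_1),…,trace(K^{-1}·K_d)) is a bijection from {K ∈ L : K positive definite} onto the cone C_L = {(trace(S·K_1),…,trace(S·K_d)) : S positive definite}. Equivalently, for every t ∈ C_L there is a unique positive definite K ∈ L with trace(K^{-1}·K_j) = t_j for all j, and its inverse K^{-1} is the maximum likelihood estimate of the covariance matrix for the sufficient statistics t. -/

import Mathlib

/-!
Injectivity: for `M ≠ N` in the cone put `A = M - N`; then
`tr((N⁻¹ - M⁻¹) A) = tr(M⁻¹ A N⁻¹ A) > 0`, whereas equal statistics make this pairing vanish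
because `A ∈ L`.

Surjectivity: for `t = π_L(S)` the covariance matrices `Σ ⪰ 0` with `π_L(Σ) = t` form a compact
set (pairing with a positive definite `Q ∈ L` bounds their trace), so `det` attains its maximum
there at some `Σ`, which is positive definite since `det Σ ≥ det S > 0`. By Jacobi's formula the
derivative of `det (Σ + r A)` at `r = 0` is `det Σ · tr(Σ⁻¹ A)`, so `tr(Σ⁻¹ A) = 0` for every
symmetric `A` with `π_L(A) = 0`. Hence `Σ⁻¹ ∈ (L^⊥)^⊥ = L`, and `Σ⁻¹` is the preimage of `t`.
-/

open Set Topology Matrix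
open scoped MatrixOrder

namespace Matrix

section

variable {n : Type*} [DecidableEq n]

lemma posSemidef_add_smul_of_abs_mul_le {M A : Matrix n n ℝ} {δ c r : ℝ}
    (hM : (M - δ • 1).PosSemidef) (hA₁ : (c • 1 - A).PosSemidef) (hA₂ : (c • 1 + A).PosSemidef)
    (hr : |r| * c ≤ δ) : (M + r • A).PosSemidef := by
  have hdecomp : M + r • A = (M - δ • 1) + ((δ - |r| * c) • 1 +
      ((|r| + r) / 2) • (c • 1 + A) + ((|r| - r) / 2) • (c • 1 - A)) := by
    module
  rw [hdecomp]
  refine hM.add (((PosSemidef.one.smul (by linarith)).add (hA₂.smul ?_)).add (hA₁.smul ?_))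
  · linarith [neg_abs_le r]
  · linarith [le_abs_self r]

end

section

variable {n : Type*} [Fintype n]

lemma isClosed_setOf_posSemidef : IsClosed {A : Matrix n n ℝ | A.PosSemidef} := by
  simp only [posSemidef_iff_dotProduct_mulVec, ofPred_and, ofPred_forall]
  refine (isClosed_eq continuous_id.matrix_conjTranspose continuous_id).inter
    (isClosed_iInter fun x => isClosed_le continuous_const ?_)
  fun_prop

variable {ι : Type*}

def posSemidefFiber (K : ι → Matrix n n ℝ) (t : ι → ℝ) : Set (Matrix n n ℝ) :=
  {S | S.PosSemidef ∧ ∀ j, (S * K j).trace = t j}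

lemma isClosed_posSemidefFiber (K : ι → Matrix n n ℝ) (t : ι → ℝ) :
    IsClosed (posSemidefFiber K t) := by
  rw [posSemidefFiber, ofPred_and, ofPred_forall]
  exact isClosed_setOf_posSemidef.inter <| isClosed_iInter fun j =>
    isClosed_eq (continuous_id.matrix_mul continuous_const).matrix_trace continuous_const

variable {R : Type*} [CommSemiring R]

lemma trace_transpose_mul_of_isSymm {Y K : Matrix n n R} (hK : K.IsSymm) :
    (Yᵀ * K).trace = (Y * K).trace := by
  rw [← trace_transpose, transpose_mul, transpose_transpose, hK.eq, trace_mul_comm]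

lemma trace_mul_eq_zero_of_mem_span {K : ι → Matrix n n R} {Y X : Matrix n n R}
    (hY : ∀ j, (Y * K j).trace = 0) (hX : X ∈ Submodule.span R (range K)) :
    (Y * X).trace = 0 := by
  induction hX using Submodule.span_induction with
  | mem _ h => obtain ⟨j, rfl⟩ := h; exact hY j
  | zero => simp
  | add _ _ _ _ h₁ h₂ => rw [Matrix.mul_add, trace_add, h₁, h₂, add_zero]
  | smul _ _ _ h => rw [Matrix.mul_smul, trace_smul, h, smul_zero]

end

variable {n : Type*} [Fintype n] [DecidableEq n]

lemma PosDef.exists_pos_posSemidef_sub_smul_one {A : Matrix n n ℝ} (hA : A.PosDef) :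
    ∃ δ : ℝ, 0 < δ ∧ (A - δ • 1).PosSemidef := by
  cases isEmpty_or_nonempty n
  · exact ⟨1, one_pos, by rw [Subsingleton.elim (A - 1 • 1) 0]; exact .zero⟩
  obtain ⟨δ, hδ, hδA⟩ := (CFC.exists_pos_algebraMap_le_iff hA.isHermitian.isSelfAdjoint).2
    fun x hx => hA.isStrictlyPositive.spectrum_pos hx
  exact ⟨δ, hδ, by rwa [le_iff, Algebra.algebraMap_eq_smul_one] at hδA⟩

lemma IsHermitian.exists_posSemidef_smul_one_sub_and_add {A : Matrix n n ℝ}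
    (hA : A.IsHermitian) : ∃ c : ℝ, (c • 1 - A).PosSemidef ∧ (c • 1 + A).PosSemidef := by
  obtain ⟨c, hc⟩ := (A.finite_spectrum.image abs).bddAbove
  refine ⟨c, ?_, ?_⟩
  · rw [← le_iff, ← Algebra.algebraMap_eq_smul_one,
      le_algebraMap_iff_spectrum_le hA.isSelfAdjoint]
    exact fun x hx => (le_abs_self x).trans (hc ⟨x, hx, rfl⟩)
  · rw [← sub_neg_eq_add, ← le_iff, ← Algebra.algebraMap_eq_smul_one, neg_le, ← map_neg,
      algebraMap_le_iff_le_spectrum hA.isSelfAdjoint]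
    exact fun x hx => neg_le.1 ((neg_le_abs x).trans (hc ⟨x, hx, rfl⟩))

lemma PosSemidef.trace_mul_nonneg {A B : Matrix n n ℝ} (hA : A.PosSemidef) (hB : B.PosSemidef) :
    0 ≤ (A * B).trace := by
  obtain ⟨C, rfl⟩ := CStarAlgebra.nonneg_iff_eq_star_mul_self.mp hA.nonneg
  rw [star_eq_conjTranspose, Matrix.mul_assoc, trace_mul_comm]
  exact (hB.mul_mul_conjTranspose_same C).trace_nonneg

lemma PosSemidef.mul_trace_le_trace_mul {A B : Matrix n n ℝ} {δ : ℝ} (hA : A.PosSemidef)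
    (hB : (B - δ • 1).PosSemidef) : δ * A.trace ≤ (A * B).trace := by
  have := hA.trace_mul_nonneg hB
  rw [Matrix.mul_sub, trace_sub, Matrix.mul_smul, Matrix.mul_one, trace_smul, smul_eq_mul] at this
  linarith

lemma PosDef.trace_mul_pos_of_posSemidef {A B : Matrix n n ℝ} (hB : B.PosDef)
    (hA : A.PosSemidef) (hA₀ : A ≠ 0) : 0 < (A * B).trace := by
  obtain ⟨δ, hδ, hBδ⟩ := hB.exists_pos_posSemidef_sub_smul_one
  have htrace : 0 < A.trace := hA.trace_nonneg.lt_of_ne' (mt hA.trace_eq_zero_iff.1 hA₀)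
  exact (mul_pos hδ htrace).trans_le (hA.mul_trace_le_trace_mul hBδ)

lemma PosDef.trace_conjTranspose_mul_mul_pos {P B : Matrix n n ℝ} (hP : P.PosDef) (hB : B ≠ 0) :
    0 < (Bᴴ * P * B).trace := by
  have hBB : B * Bᴴ ≠ 0 := fun h =>
    hB (trace_mul_conjTranspose_self_eq_zero_iff.1 (by rw [h, trace_zero]))
  rw [trace_mul_cycle]
  exact hP.trace_mul_pos_of_posSemidef (posSemidef_self_mul_conjTranspose B) hBB

lemma PosDef.trace_inv_sub_inv_mul_sub_pos {M N : Matrix n n ℝ} (hM : M.PosDef) (hN : N.PosDef)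
    (hMN : M ≠ N) : 0 < ((N⁻¹ - M⁻¹) * (M - N)).trace := by
  set A := M - N
  have hA : Aᴴ = A := (hM.isHermitian.sub hN.isHermitian).eq
  have hinv : N⁻¹ - M⁻¹ = M⁻¹ * A * N⁻¹ := by
    rw [Matrix.mul_sub, Matrix.sub_mul, nonsing_inv_mul _ ((isUnit_iff_isUnit_det M).1 hM.isUnit),
      Matrix.one_mul, Matrix.mul_assoc, mul_nonsing_inv _ ((isUnit_iff_isUnit_det N).1 hN.isUnit),
      Matrix.mul_one]
  have hconj : Aᴴ * N⁻¹ * A ≠ 0 := fun h =>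
    (hN.inv.trace_conjTranspose_mul_mul_pos (sub_ne_zero.2 hMN)).ne' (by rw [h, trace_zero])
  rw [hinv, show M⁻¹ * A * N⁻¹ * A = M⁻¹ * (Aᴴ * N⁻¹ * A) by simp only [hA, Matrix.mul_assoc],
    trace_mul_comm]
  exact hM.inv.trace_mul_pos_of_posSemidef (hN.inv.posSemidef.conjTranspose_mul_mul_same A) hconj

lemma PosSemidef.abs_apply_le_trace {A : Matrix n n ℝ} (hA : A.PosSemidef) (i j : n) :
    |A i j| ≤ A.trace := by
  have hquad (s : ℝ) : 0 ≤ A i i + s * A j i + s * (A i j + s * A j j) := by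
    have := hA.dotProduct_mulVec_nonneg (Pi.single i 1 + s • Pi.single j 1)
    simpa only [star_trivial, mulVec_add, mulVec_single, MulOpposite.op_one, one_smul,
      mulVec_smul, dotProduct_add, add_dotProduct, single_dotProduct, col_apply, one_mul,
      smul_dotProduct, smul_eq_mul, dotProduct_smul] using this
  have hji : A j i = A i j := by simpa using hA.1.apply i j
  have hdiag (k : n) : A k k ≤ A.trace :=
    Finset.single_le_sum (f := fun k => A k k) (fun _ _ => hA.diag_nonneg) (Finset.mem_univ k)
  have h₁ := hquad 1
  have h₂ := hquad (-1)
  rw [abs_le]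
  constructor <;> linarith [hdiag i, hdiag j]

lemma isCompact_setOf_posSemidef_trace_le (c : ℝ) :
    IsCompact {A : Matrix n n ℝ | A.PosSemidef ∧ A.trace ≤ c} := by
  have hbox : IsCompact (univ.pi fun _ : n => univ.pi fun _ : n => Icc (-c) c) :=
    isCompact_univ_pi fun _ => isCompact_univ_pi fun _ => isCompact_Icc
  refine hbox.of_isClosed_subset
    (isClosed_setOf_posSemidef.inter (isClosed_le continuous_id.matrix_trace continuous_const))
    fun A ⟨hA, hAc⟩ i _ j _ => abs_le.1 ((hA.abs_apply_le_trace i j).trans hAc)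

section Jacobi

variable {𝕜 : Type*} [NontriviallyNormedField 𝕜]

open Polynomial in
lemma hasDerivAt_det_one_add_smul (A : Matrix n n 𝕜) :
    HasDerivAt (fun r : 𝕜 => (1 + r • A).det) A.trace 0 := by
  have := (det (1 + (X : 𝕜[X]) • A.map C)).hasDerivAt 0
  rw [derivative_det_one_add_X_smul] at this
  convert this using 2 with r
  simp [eval_det, ← smul_eq_mul_diagonal]

lemma hasDerivAt_det_add_smul {M : Matrix n n 𝕜} (hM : IsUnit M) (A : Matrix n n 𝕜) :
    HasDerivAt (fun r : 𝕜 => (M + r • A).det) (M.det * (M⁻¹ * A).trace) 0 := by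
  have hfactor (r : 𝕜) : M + r • A = M * (1 + r • (M⁻¹ * A)) := by
    rw [Matrix.mul_add, Matrix.mul_one, Matrix.mul_smul, ← Matrix.mul_assoc,
      mul_nonsing_inv _ ((isUnit_iff_isUnit_det M).1 hM), Matrix.one_mul]
  simp_rw [hfactor, det_mul]
  exact (hasDerivAt_det_one_add_smul _).const_mul _

end Jacobi

section Span

variable {R : Type*} [CommSemiring R]

lemma exists_eq_trace_mul (f : Module.Dual R (Matrix n n R)) :
    ∃ Y : Matrix n n R, ∀ X, f X = (Y * X).trace := by
  refine ⟨of fun j i => f (single i j 1), fun X => ?_⟩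
  rw [matrix_eq_sum_single X]
  simp only [map_sum, Matrix.mul_sum, trace_sum, trace_mul_single, of_apply]
  refine Finset.sum_congr rfl fun i _ => Finset.sum_congr rfl fun j _ => ?_
  rw [← mul_one (X i j), ← smul_eq_mul, ← smul_single, map_smul]
  simp [mul_comm]

lemma mem_span_of_forall_trace_mul_eq_zero {F : Type*} [Field F] {ι : Type*}
    {K : ι → Matrix n n F} {X : Matrix n n F}
    (h : ∀ Y : Matrix n n F, (∀ j, (Y * K j).trace = 0) → (Y * X).trace = 0) :
    X ∈ Submodule.span F (range K) := by
  by_contra hX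
  obtain ⟨f, hfX, hfK⟩ := Submodule.exists_dual_map_eq_bot_of_notMem hX inferInstance
  obtain ⟨Y, hY⟩ := exists_eq_trace_mul f
  refine hfX ((hY X).trans (h Y fun j => (hY (K j)).symm.trans ?_))
  have hmem := Submodule.mem_map_of_mem (f := f) (Submodule.subset_span (mem_range_self (f := K) j))
  rwa [hfK, Submodule.mem_bot] at hmem

end Span

lemma mem_span_of_forall_isHermitian_trace_mul_eq_zero {ι : Type*} {K : ι → Matrix n n ℝ}
    (hK : ∀ j, (K j).IsSymm) {X : Matrix n n ℝ} (hX : X.IsSymm)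
    (h : ∀ H : Matrix n n ℝ, H.IsHermitian → (∀ j, (H * K j).trace = 0) → (H * X).trace = 0) :
    X ∈ Submodule.span ℝ (range K) := by
  refine mem_span_of_forall_trace_mul_eq_zero fun Y hY => ?_
  have hsymm {Z : Matrix n n ℝ} (hZ : Z.IsSymm) : ((Y + Yᵀ) * Z).trace = 2 * (Y * Z).trace := by
    rw [Matrix.add_mul, trace_add, trace_transpose_mul_of_isSymm hZ, two_mul]
  have := h (Y + Yᵀ) (by simpa using isSymm_add_transpose_self Y)
    fun j => by rw [hsymm (hK j), hY j, mul_zero]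
  rw [hsymm hX] at this
  exact (mul_eq_zero.1 this).resolve_left two_ne_zero

section Fiber

variable {ι : Type*}

lemma isCompact_posSemidefFiber [Fintype ι] {K : ι → Matrix n n ℝ} {l : ι → ℝ}
    (hl : (∑ j, l j • K j).PosDef) (t : ι → ℝ) : IsCompact (posSemidefFiber K t) := by
  obtain ⟨δ, hδ, hQδ⟩ := hl.exists_pos_posSemidef_sub_smul_one
  refine (isCompact_setOf_posSemidef_trace_le ((∑ j, l j * t j) / δ)).of_isClosed_subset
    (isClosed_posSemidefFiber K t) fun S ⟨hS, hSt⟩ => ⟨hS, ?_⟩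
  have hpair : (S * ∑ j, l j • K j).trace = ∑ j, l j * t j := by
    simp only [Matrix.mul_sum, trace_sum, Matrix.mul_smul, trace_smul, hSt, smul_eq_mul]
  rw [le_div_iff₀ hδ, mul_comm, ← hpair]
  exact hS.mul_trace_le_trace_mul hQδ

lemma exists_posDef_isMaxOn_det_posSemidefFiber [Fintype ι] {K : ι → Matrix n n ℝ}
    {l : ι → ℝ} (hl : (∑ j, l j • K j).PosDef) {t : ι → ℝ} {S : Matrix n n ℝ} (hS : S.PosDef)
    (hSt : ∀ j, (S * K j).trace = t j) :
    ∃ V ∈ posSemidefFiber K t, V.PosDef ∧ IsMaxOn det (posSemidefFiber K t) V := by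
  obtain ⟨V, hV, hmax⟩ := (isCompact_posSemidefFiber hl t).exists_isMaxOn
    ⟨S, hS.posSemidef, hSt⟩ continuous_id.matrix_det.continuousOn
  refine ⟨V, hV, hV.1.posDef_iff_det_ne_zero.2 ?_, hmax⟩
  exact (hS.det_pos.trans_le (hmax ⟨hS.posSemidef, hSt⟩)).ne'

lemma trace_inv_mul_eq_zero_of_isMaxOn_det {K : ι → Matrix n n ℝ} {t : ι → ℝ}
    {V : Matrix n n ℝ} (hVt : V ∈ posSemidefFiber K t) (hV : V.PosDef)
    (hmax : IsMaxOn det (posSemidefFiber K t) V) {A : Matrix n n ℝ} (hA : A.IsHermitian)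
    (hAK : ∀ j, (A * K j).trace = 0) : (V⁻¹ * A).trace = 0 := by
  obtain ⟨δ, hδ, hVδ⟩ := hV.exists_pos_posSemidef_sub_smul_one
  obtain ⟨c, hA₁, hA₂⟩ := hA.exists_posSemidef_smul_one_sub_and_add
  have hsmall : ∀ᶠ r in 𝓝 (0 : ℝ), |r| * c < δ :=
    (continuous_abs.mul continuous_const).continuousAt.eventually_lt continuousAt_const
      (by simpa using hδ)
  have hlocal : IsLocalMax (fun r : ℝ => (V + r • A).det) 0 := by
    filter_upwards [hsmall] with r hr
    rw [zero_smul, add_zero]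
    refine hmax ⟨posSemidef_add_smul_of_abs_mul_le hVδ hA₁ hA₂ hr.le, fun j => ?_⟩
    rw [Matrix.add_mul, trace_add, Matrix.smul_mul, trace_smul, hAK, smul_zero, add_zero, hVt.2]
  have := hlocal.hasDerivAt_eq_zero (hasDerivAt_det_add_smul hV.isUnit A)
  exact (mul_eq_zero.1 this).resolve_left hV.det_pos.ne'

lemma inv_mem_span_of_isMaxOn_det {K : ι → Matrix n n ℝ} (hK : ∀ j, (K j).IsSymm) {t : ι → ℝ}
    {V : Matrix n n ℝ} (hVt : V ∈ posSemidefFiber K t) (hV : V.PosDef)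
    (hmax : IsMaxOn det (posSemidefFiber K t) V) : V⁻¹ ∈ Submodule.span ℝ (range K) := by
  refine mem_span_of_forall_isHermitian_trace_mul_eq_zero hK (by simpa using hV.inv.isHermitian)
    fun H hH hHK => ?_
  rw [trace_mul_comm]
  exact trace_inv_mul_eq_zero_of_isMaxOn_det hVt hV hmax hH hHK

end Fiber

end Matrix

theorem concentration_to_sufficient_statistics_bijOn_general
    (m d : ℕ) (K : Fin d → Matrix (Fin m) (Fin m) ℝ)
    (hsymm : ∀ j, (K j).IsSymm)
    (hpd : ∃ l : Fin d → ℝ, (∑ j, l j • K j).PosDef) :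
    Set.BijOn (fun M : Matrix (Fin m) (Fin m) ℝ => fun j => (M⁻¹ * K j).trace)
      {M : Matrix (Fin m) (Fin m) ℝ |
        M ∈ Submodule.span ℝ (Set.range K) ∧ M.PosDef}
      {t : Fin d → ℝ |
        ∃ S : Matrix (Fin m) (Fin m) ℝ, S.PosDef ∧ ∀ j, (S * K j).trace = t j} := by
  refine ⟨fun M hM => ⟨M⁻¹, hM.2.inv, fun j => rfl⟩, ?_, ?_⟩
  · rintro M ⟨hML, hM⟩ N ⟨hNL, hN⟩ hMN
    by_contra hne
    have hK j : ((N⁻¹ - M⁻¹) * K j).trace = 0 := by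
      rw [Matrix.sub_mul, trace_sub, sub_eq_zero]
      exact (congrFun hMN j).symm
    exact (hM.trace_inv_sub_inv_mul_sub_pos hN hne).ne'
      (trace_mul_eq_zero_of_mem_span hK (Submodule.sub_mem _ hML hNL))
  · rintro t ⟨S, hS, hSt⟩
    obtain ⟨l, hl⟩ := hpd
    obtain ⟨V, hVt, hV, hmax⟩ := exists_posDef_isMaxOn_det_posSemidefFiber hl hS hSt
    refine ⟨V⁻¹, ⟨inv_mem_span_of_isMaxOn_det hsymm hVt hV hmax, hV.inv⟩, funext fun j => ?_⟩
    dsimp only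
    rw [nonsing_inv_nonsing_inv _ ((isUnit_iff_isUnit_det V).1 hV.isUnit), hVt.2 j]

/-- The map `K ↦ (trace(K⁻¹·K₁),…,trace(K⁻¹·K_d))` is a bijection from the cone
of concentration matrices `{K ∈ L : K ≻ 0}` (where `L = span(K₁,…,K_d)`) onto
the cone of sufficient statistics
`C_L = {(trace(S·K₁),…,trace(S·K_d)) : S ≻ 0}`. -/
theorem concentration_to_sufficient_statistics_bijOn
    (m d : ℕ) (K : Fin d → Matrix (Fin m) (Fin m) ℝ)
    (hsymm : ∀ j, (K j).IsSymm)
    (hindep : LinearIndependent ℝ K)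
    (hpd : ∃ l : Fin d → ℝ, (∑ j, l j • K j).PosDef) :
    Set.BijOn (fun M : Matrix (Fin m) (Fin m) ℝ => fun j => (M⁻¹ * K j).trace)
      {M : Matrix (Fin m) (Fin m) ℝ |
        M ∈ Submodule.span ℝ (Set.range K) ∧ M.PosDef}
      {t : Fin d → ℝ |
        ∃ S : Matrix (Fin m) (Fin m) ℝ, S.PosDef ∧ ∀ j, (S * K j).trace = t j} :=
  concentration_to_sufficient_statistics_bijOn_general m d K hsymm hpd
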